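/- arXiv:2603.08982 — 2 statements merged into one kernel-verified Lean document; each statement's English description precedes it below -/
import Mathlib

section
/- Fix q, q̄ ∈ ℝ^d, a finite index set S, and for each j ∈ S vectors k_j, k̄_j ∈ ℝ^d with ‖k_j‖₂ ≤ K_max and ‖k̄_j‖₂ ≤ K_max. Define f_j(x) = exp(⟨x,k_j⟩/√d) − exp(⟨x,k̄_j⟩/√d) and the segment q(t) = (1−t)·q + t·q̄ for t ∈ [0,1]. Suppose Z > 0 is such that for every t ∈ [0,1] both Σ_{j∈S} exp(⟨q(t),k_j⟩/√d) ≤ Z and Σ_{j∈S} exp(⟨q(t),k̄_j⟩/√d) ≤ Z hold. Then (1/Z²) · Σ_{j∈S} (f_j(q) − f_j(q̄))² ≤ 4·‖q − q̄‖₂²·K_max²/d. -/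
open scoped RealInnerProductSpace

/-- If the exponentiated logits along the segment `q(t) = (1−t)q + t q̄`
are dominated by a normalizer `Z > 0`, then
`(1/Z²) Σ_{j∈S} (f_j(q) − f_j(q̄))² ≤ 4 ‖q − q̄‖² K_max²/d`
for `f_j(x) = exp(⟨x,k_j⟩/√d) − exp(⟨x,k̄_j⟩/√d)`. -/
theorem sparse_attention_normalized_segment_bound
    (d : ℕ) (hd : 0 < d) {J : Type*} (S : Finset J)
    (q qbar : EuclideanSpace ℝ (Fin d))
    (k kbar : J → EuclideanSpace ℝ (Fin d))
    (Kmax : ℝ) (hKmax : 0 ≤ Kmax)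
    (hk : ∀ j ∈ S, ‖k j‖ ≤ Kmax) (hkbar : ∀ j ∈ S, ‖kbar j‖ ≤ Kmax)
    (f : J → EuclideanSpace ℝ (Fin d) → ℝ)
    (hf : ∀ j x, f j x = Real.exp (⟪x, k j⟫ / Real.sqrt d)
        - Real.exp (⟪x, kbar j⟫ / Real.sqrt d))
    (qt : ℝ → EuclideanSpace ℝ (Fin d))
    (hqt : ∀ t, qt t = (1 - t) • q + t • qbar)
    (Z : ℝ) (hZ : 0 < Z)
    (hZk : ∀ t ∈ Set.Icc (0:ℝ) 1, ∑ j ∈ S, Real.exp (⟪qt t, k j⟫ / Real.sqrt d) ≤ Z)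
    (hZkbar : ∀ t ∈ Set.Icc (0:ℝ) 1, ∑ j ∈ S, Real.exp (⟪qt t, kbar j⟫ / Real.sqrt d) ≤ Z) :
    (1 / Z ^ 2) * ∑ j ∈ S, (f j q - f j qbar) ^ 2 ≤
      4 * ‖q - qbar‖ ^ 2 * Kmax ^ 2 / d := by
  have hd' : (0:ℝ) < d := by exact_mod_cast hd
  set s : ℝ := Real.sqrt d with hs
  have hs0 : 0 < s := Real.sqrt_pos.2 hd'
  set A : J → ℝ := fun j => ⟪q, k j⟫ / s with hA
  set B : J → ℝ := fun j => ⟪q, kbar j⟫ / s with hB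
  set dA : J → ℝ := fun j => ⟪qbar - q, k j⟫ / s with hdA
  set dB : J → ℝ := fun j => ⟪qbar - q, kbar j⟫ / s with hdB
  have hqtk : ∀ (t : ℝ) (v : EuclideanSpace ℝ (Fin d)),
      ⟪qt t, v⟫ / s = ⟪q, v⟫ / s + t * (⟪qbar - q, v⟫ / s) := by
    intro t v
    rw [hqt]
    rw [inner_sub_left, inner_add_left, real_inner_smul_left, real_inner_smul_left]
    ring
  set c : ℝ := ‖q - qbar‖ * Kmax / s with hc
  have hc0 : 0 ≤ c := div_nonneg (mul_nonneg (norm_nonneg _) hKmax) hs0.le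
  -- derivative bounds on coefficients
  have hdAle : ∀ j ∈ S, |dA j| ≤ c := by
    intro j hj
    rw [hdA, hc]
    simp only
    rw [abs_div, abs_of_pos hs0]
    gcongr
    calc |⟪qbar - q, k j⟫| ≤ ‖qbar - q‖ * ‖k j‖ := abs_real_inner_le_norm _ _
      _ ≤ ‖q - qbar‖ * Kmax := by
          rw [norm_sub_rev]
          exact mul_le_mul_of_nonneg_left (hk j hj) (norm_nonneg _)
  have hdBle : ∀ j ∈ S, |dB j| ≤ c := by
    intro j hj
    rw [hdB, hc]
    simp only
    rw [abs_div, abs_of_pos hs0]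
    gcongr
    calc |⟪qbar - q, kbar j⟫| ≤ ‖qbar - q‖ * ‖kbar j‖ := abs_real_inner_le_norm _ _
      _ ≤ ‖q - qbar‖ * Kmax := by
          rw [norm_sub_rev]
          exact mul_le_mul_of_nonneg_left (hkbar j hj) (norm_nonneg _)
  -- the derivative function
  set h : J → ℝ → ℝ := fun j t =>
    dA j * Real.exp (A j + t * dA j) - dB j * Real.exp (B j + t * dB j) with hh
  have hderiv : ∀ j t, HasDerivAt
      (fun t => Real.exp (A j + t * dA j) - Real.exp (B j + t * dB j)) (h j t) t := by
    intro j t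
    have h1 : HasDerivAt (fun t : ℝ => A j + t * dA j) (dA j) t :=
      (hasDerivAt_mul_const (dA j)).const_add (A j)
    have h2 : HasDerivAt (fun t : ℝ => B j + t * dB j) (dB j) t :=
      (hasDerivAt_mul_const (dB j)).const_add (B j)
    have := (h1.exp).sub (h2.exp)
    simpa [hh, mul_comm, Pi.sub_def] using this
  have hcont : ∀ j, Continuous (h j) := by
    intro j
    rw [hh]
    fun_prop
  have hInt : ∀ j, IntervalIntegrable (h j) MeasureTheory.volume 0 1 :=
    fun j => (hcont j).intervalIntegrable 0 1
  have hFTC : ∀ j, f j q - f j qbar = -(∫ t in (0:ℝ)..1, h j t) := by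
    intro j
    rw [intervalIntegral.integral_eq_sub_of_hasDerivAt (fun t _ => hderiv j t) (hInt j)]
    rw [hf, hf]
    have e0 : ⟪q, k j⟫ / s = A j + (0:ℝ) * dA j := by rw [hA]; ring
    have e0' : ⟪q, kbar j⟫ / s = B j + (0:ℝ) * dB j := by rw [hB]; ring
    have e1 : ⟪qbar, k j⟫ / s = A j + (1:ℝ) * dA j := by
      rw [hA, hdA]; simp only [inner_sub_left]; ring
    have e1' : ⟪qbar, kbar j⟫ / s = B j + (1:ℝ) * dB j := by
      rw [hB, hdB]; simp only [inner_sub_left]; ring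
    rw [e0, e0', e1, e1']
    ring
  -- M j
  set E : J → ℝ → ℝ := fun j t =>
    Real.exp (A j + t * dA j) + Real.exp (B j + t * dB j) with hE
  set M : J → ℝ := fun j => ∫ t in (0:ℝ)..1, E j t with hM
  have hEcont : ∀ j, Continuous (E j) := by intro j; rw [hE]; fun_prop
  have hEInt : ∀ j, IntervalIntegrable (E j) MeasureTheory.volume 0 1 :=
    fun j => (hEcont j).intervalIntegrable 0 1
  have hM0 : ∀ j, 0 ≤ M j := by
    intro j
    apply intervalIntegral.integral_nonneg (by norm_num)
    intro t _
    positivity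
  have hDle : ∀ j ∈ S, |f j q - f j qbar| ≤ c * M j := by
    intro j hj
    rw [hFTC j, abs_neg]
    calc |∫ t in (0:ℝ)..1, h j t| ≤ ∫ t in (0:ℝ)..1, |h j t| :=
          intervalIntegral.abs_integral_le_integral_abs (by norm_num)
      _ ≤ ∫ t in (0:ℝ)..1, c * E j t := by
          apply intervalIntegral.integral_mono_on (by norm_num)
            (hInt j).abs ((hEInt j).const_mul c)
          intro t _
          rw [hh, hE]
          simp only
          calc |dA j * Real.exp (A j + t * dA j) - dB j * Real.exp (B j + t * dB j)|
              ≤ |dA j * Real.exp (A j + t * dA j)| + |dB j * Real.exp (B j + t * dB j)| :=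
                abs_sub _ _
            _ ≤ c * Real.exp (A j + t * dA j) + c * Real.exp (B j + t * dB j) := by
                rw [abs_mul, abs_mul, abs_of_pos (Real.exp_pos _), abs_of_pos (Real.exp_pos _)]
                gcongr
                · exact hdAle j hj
                · exact hdBle j hj
            _ = c * (Real.exp (A j + t * dA j) + Real.exp (B j + t * dB j)) := by ring
      _ = c * M j := by rw [intervalIntegral.integral_const_mul, hM]
  -- sum of M bounded by 2Z
  have hsumM : ∑ j ∈ S, M j ≤ 2 * Z := by
    have hswap : ∑ j ∈ S, M j = ∫ t in (0:ℝ)..1, ∑ j ∈ S, E j t := by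
      rw [hM]
      exact (intervalIntegral.integral_finset_sum (fun j _ => hEInt j)).symm
    rw [hswap]
    have : (2 * Z) = ∫ t in (0:ℝ)..1, (2 * Z : ℝ) := by simp
    rw [this]
    have hIntSum : IntervalIntegrable (fun t => ∑ j ∈ S, E j t) MeasureTheory.volume 0 1 :=
      (continuous_finset_sum S (fun j _ => hEcont j)).intervalIntegrable 0 1
    apply intervalIntegral.integral_mono_on (by norm_num) hIntSum intervalIntegrable_const
    intro t ht
    have h1 := hZk t ht
    have h2 := hZkbar t ht
    have e1 : ∀ j, Real.exp (A j + t * dA j) = Real.exp (⟪qt t, k j⟫ / Real.sqrt d) := by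
      intro j; rw [hqtk t (k j)]
    have e2 : ∀ j, Real.exp (B j + t * dB j) = Real.exp (⟪qt t, kbar j⟫ / Real.sqrt d) := by
      intro j; rw [hqtk t (kbar j)]
    calc ∑ j ∈ S, E j t = (∑ j ∈ S, Real.exp (⟪qt t, k j⟫ / Real.sqrt d)) +
          ∑ j ∈ S, Real.exp (⟪qt t, kbar j⟫ / Real.sqrt d) := by
          rw [← Finset.sum_add_distrib]
          apply Finset.sum_congr rfl
          intro j _
          rw [hE]; simp only [e1, e2]
      _ ≤ Z + Z := add_le_add h1 h2
      _ = 2 * Z := by ring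
  -- main chain
  have hmain : ∑ j ∈ S, (f j q - f j qbar) ^ 2 ≤ c ^ 2 * (2 * Z) ^ 2 := by
    calc ∑ j ∈ S, (f j q - f j qbar) ^ 2 ≤ ∑ j ∈ S, (c * M j) ^ 2 := by
          apply Finset.sum_le_sum
          intro j hj
          rw [← sq_abs (f j q - f j qbar)]
          exact pow_le_pow_left₀ (abs_nonneg _) (hDle j hj) 2
      _ = c ^ 2 * ∑ j ∈ S, (M j) ^ 2 := by
          rw [Finset.mul_sum]; apply Finset.sum_congr rfl; intro j _; ring
      _ ≤ c ^ 2 * (∑ j ∈ S, M j) ^ 2 := by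
          gcongr
          exact Finset.sum_sq_le_sq_sum_of_nonneg (fun j _ => hM0 j)
      _ ≤ c ^ 2 * (2 * Z) ^ 2 := by
          gcongr
          exact Finset.sum_nonneg (fun j _ => hM0 j)
  have hZ2 : (0:ℝ) < Z ^ 2 := by positivity
  have hcd : c ^ 2 = ‖q - qbar‖ ^ 2 * Kmax ^ 2 / d := by
    rw [hc, div_pow, mul_pow, hs, Real.sq_sqrt (le_of_lt hd')]
  calc (1 / Z ^ 2) * ∑ j ∈ S, (f j q - f j qbar) ^ 2
      ≤ (1 / Z ^ 2) * (c ^ 2 * (2 * Z) ^ 2) := by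
        apply mul_le_mul_of_nonneg_left hmain
        positivity
    _ = 4 * c ^ 2 := by field_simp; ring
    _ = 4 * ‖q - qbar‖ ^ 2 * Kmax ^ 2 / d := by rw [hcd]; ring
end

section
/- Under the exact normalizer-stability assumption, the total normalized squared deviation between the true and proxy difference functions over all masked entries satisfies Σ_{i=1}^{N_q} (1/Z_i²) · Σ_{j : M_{ij}=0} (f_j(q_i) − f_j(q̄_i))² ≤ 4·N_q·δ_q²·K_max²/d, where f_j(x) = exp(⟨x,k_j⟩/√d) − exp(⟨x,k̄_j⟩/√d). -/
open scoped RealInnerProductSpace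

lemma exp_sub_exp_le_aux (s : ℝ) (hs : 0 ≤ s) :
    Real.exp s - 1 ≤ s * (Real.exp s + 1) / 2 := by
  have hderiv : ∀ t : ℝ, HasDerivAt (fun u => u * (Real.exp u + 1) / 2 - Real.exp u)
      (((Real.exp t + 1) + t * Real.exp t) / 2 - Real.exp t) t := by
    intro t
    have h1 : HasDerivAt (fun u : ℝ => u * (Real.exp u + 1))
        ((Real.exp t + 1) + t * Real.exp t) t := by
      have := (hasDerivAt_id t).mul ((Real.hasDerivAt_exp t).add_const 1)
      simpa [mul_comm, add_comm, Pi.mul_def] using this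
    simpa [Pi.sub_def] using (h1.div_const 2).sub (Real.hasDerivAt_exp t)
  have hmono : Monotone (fun u : ℝ => u * (Real.exp u + 1) / 2 - Real.exp u) := by
    apply monotone_of_deriv_nonneg
    · intro t; exact (hderiv t).differentiableAt
    · intro t
      rw [(hderiv t).deriv]
      have h3 : (1 - t) * Real.exp t ≤ 1 := by
        have h2 : 1 - t ≤ Real.exp (-t) := by linarith [Real.add_one_le_exp (-t)]
        calc (1 - t) * Real.exp t ≤ Real.exp (-t) * Real.exp t :=
              mul_le_mul_of_nonneg_right h2 (Real.exp_pos t).le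
          _ = 1 := by rw [← Real.exp_add]; simp
      nlinarith [h3]
  have h0 := hmono hs
  simp only [Real.exp_zero, zero_mul, zero_div, zero_sub] at h0
  linarith

lemma exp_sub_exp_le_one_sided (x y : ℝ) (h : y ≤ x) :
    Real.exp x - Real.exp y ≤ (x - y) * (Real.exp x + Real.exp y) / 2 := by
  have hs : 0 ≤ x - y := sub_nonneg.mpr h
  have key := exp_sub_exp_le_aux (x - y) hs
  have hey := (Real.exp_pos y).le
  have hxy : Real.exp (x - y) * Real.exp y = Real.exp x := by
    rw [← Real.exp_add]; ring_nf
  calc Real.exp x - Real.exp y = (Real.exp (x - y) - 1) * Real.exp y := by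
        rw [sub_mul, one_mul, hxy]
    _ ≤ ((x - y) * (Real.exp (x - y) + 1) / 2) * Real.exp y :=
        mul_le_mul_of_nonneg_right key hey
    _ = (x - y) * (Real.exp (x - y) * Real.exp y + Real.exp y) / 2 := by ring
    _ = (x - y) * (Real.exp x + Real.exp y) / 2 := by rw [hxy]

lemma abs_exp_sub_exp_le (x y : ℝ) :
    |Real.exp x - Real.exp y| ≤ |x - y| * (Real.exp x + Real.exp y) / 2 := by
  rcases le_total y x with h | h
  · rw [abs_of_nonneg (sub_nonneg.mpr (Real.exp_le_exp.mpr h)), abs_of_nonneg (sub_nonneg.mpr h)]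
    exact exp_sub_exp_le_one_sided x y h
  · have := exp_sub_exp_le_one_sided y x h
    rw [abs_sub_comm, abs_sub_comm x y,
      abs_of_nonneg (sub_nonneg.mpr (Real.exp_le_exp.mpr h)), abs_of_nonneg (sub_nonneg.mpr h)]
    linarith

/-- Under the exact normalizer-stability assumption, the total normalized
squared deviation between the true and proxy difference functions over all masked entries
satisfies `Σ_i (1/Z_i²) Σ_{j : M_{ij}=0} (f_j(q_i) − f_j(q̄_i))² ≤ 4 N_q δ_q² K_max²/d`,
where `f_j(x) = exp(⟨x,k_j⟩/√d) − exp(⟨x,k̄_j⟩/√d)`. -/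
theorem sparse_attention_total_masked_deviation_bound
    (d Nq Nk : ℕ) (hd : 0 < d) (hNq : 0 < Nq) (hNk : 0 < Nk)
    (q qbar : Fin Nq → EuclideanSpace ℝ (Fin d))
    (k kbar : Fin Nk → EuclideanSpace ℝ (Fin d))
    -- the keys are partitioned into clusters by the assignment `cl`, and `kbar j` is the
    -- arithmetic mean of the keys in the cluster containing `j`
    (cl : Fin Nk → Fin Nk)
    (hkbar : ∀ j, kbar j =
      ((Finset.univ.filter fun j' => cl j' = cl j).card : ℝ)⁻¹ •
        ∑ j' ∈ Finset.univ.filter fun j' => cl j' = cl j, k j')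
    (M : Fin Nq → Fin Nk → ℝ) (hM : ∀ i j, M i j = 0 ∨ M i j = 1)
    (Z : Fin Nq → ℝ)
    (hZ : ∀ i, Z i = ∑ j, Real.exp (⟪q i, k j⟫ / Real.sqrt d))
    (f : Fin Nk → EuclideanSpace ℝ (Fin d) → ℝ)
    (hf : ∀ j x, f j x = Real.exp (⟪x, k j⟫ / Real.sqrt d)
        - Real.exp (⟪x, kbar j⟫ / Real.sqrt d))
    (δq2 : ℝ) (hδq2 : δq2 = (Nq : ℝ)⁻¹ * ∑ i, ‖q i - qbar i‖ ^ 2)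
    (Kmax : ℝ) (hKmax : IsGreatest (Set.range fun j => ‖k j‖) Kmax)
    -- the exact normalizer-stability assumption
    (hstab : ∀ i, ∀ t₁ ∈ Set.Icc (0:ℝ) 1, ∀ t₂ ∈ Set.Icc (0:ℝ) 1,
      (∑ j ∈ Finset.univ.filter (fun j => M i j = 1),
          Real.exp (⟪q i, k j⟫ / Real.sqrt d)) +
        (∑ j ∈ Finset.univ.filter (fun j => M i j = 0),
          Real.exp (⟪q i + t₁ • (qbar i - q i),
            k j + t₂ • (kbar j - k j)⟫ / Real.sqrt d)) = Z i) :
    ∑ i, (1 / (Z i) ^ 2) *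
        ∑ j ∈ Finset.univ.filter (fun j => M i j = 0), (f j (q i) - f j (qbar i)) ^ 2 ≤
      4 * Nq * δq2 * Kmax ^ 2 / d := by
  classical
  haveI : Nonempty (Fin Nk) := ⟨⟨0, hNk⟩⟩
  have hd' : (0:ℝ) < d := by exact_mod_cast hd
  have hsd : (0:ℝ) < Real.sqrt d := Real.sqrt_pos.mpr hd'
  have hK : ∀ j, ‖k j‖ ≤ Kmax := fun j => hKmax.2 ⟨j, rfl⟩
  have hK0 : 0 ≤ Kmax := by
    obtain ⟨⟨j0, hj0⟩, -⟩ := hKmax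
    exact hj0 ▸ norm_nonneg _
  have hKbar : ∀ j, ‖kbar j‖ ≤ Kmax := by
    intro j
    rw [hkbar j]
    set S := Finset.univ.filter fun j' => cl j' = cl j with hS
    have hjS : j ∈ S := by simp [hS]
    have hcard : 0 < (S.card : ℝ) := by
      exact_mod_cast Finset.card_pos.mpr ⟨j, hjS⟩
    calc ‖(S.card : ℝ)⁻¹ • ∑ j' ∈ S, k j'‖
        = (S.card : ℝ)⁻¹ * ‖∑ j' ∈ S, k j'‖ := by
          rw [norm_smul, Real.norm_eq_abs, abs_of_nonneg (by positivity)]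
      _ ≤ (S.card : ℝ)⁻¹ * ∑ j' ∈ S, ‖k j'‖ := by
          gcongr; exact norm_sum_le _ _
      _ ≤ (S.card : ℝ)⁻¹ * ∑ j' ∈ S, Kmax := by
          gcongr with j' hj'; exact hK j'
      _ = Kmax := by
          rw [Finset.sum_const, nsmul_eq_mul]
          field_simp
  have hZpos : ∀ i, 0 < Z i := by
    intro i
    rw [hZ i]
    exact Finset.sum_pos (fun j _ => Real.exp_pos _) Finset.univ_nonempty
  set F : Fin Nq → Finset (Fin Nk) := fun i => Finset.univ.filter (fun j => M i j = 0) with hF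
  have hmask : ∀ (t₁ t₂ : ℝ), t₁ ∈ Set.Icc (0:ℝ) 1 → t₂ ∈ Set.Icc (0:ℝ) 1 → ∀ i,
      ∑ j ∈ F i, Real.exp (⟪q i + t₁ • (qbar i - q i),
        k j + t₂ • (kbar j - k j)⟫ / Real.sqrt d) ≤ Z i := by
    intro t₁ t₂ ht₁ ht₂ i
    have h := hstab i t₁ ht₁ t₂ ht₂
    have hpos : 0 ≤ ∑ j ∈ Finset.univ.filter (fun j => M i j = 1),
        Real.exp (⟪q i, k j⟫ / Real.sqrt d) :=
      Finset.sum_nonneg fun j _ => (Real.exp_pos _).le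
    rw [hF]
    linarith
  have hq1 : ∀ i, q i + (qbar i - q i) = qbar i := fun i => by abel
  have hk1 : ∀ j, k j + (kbar j - k j) = kbar j := fun j => by abel
  have h01 : (0:ℝ) ∈ Set.Icc (0:ℝ) 1 := ⟨le_rfl, zero_le_one⟩
  have h11 : (1:ℝ) ∈ Set.Icc (0:ℝ) 1 := ⟨zero_le_one, le_rfl⟩
  have hA : ∀ i, ∑ j ∈ F i, Real.exp (⟪q i, k j⟫ / Real.sqrt d) ≤ Z i := by
    intro i
    have := hmask 0 0 h01 h01 i
    simpa only [zero_smul, add_zero] using this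
  have hB : ∀ i, ∑ j ∈ F i, Real.exp (⟪qbar i, k j⟫ / Real.sqrt d) ≤ Z i := by
    intro i
    have := hmask 1 0 h11 h01 i
    simpa only [zero_smul, add_zero, one_smul, hq1] using this
  have hC : ∀ i, ∑ j ∈ F i, Real.exp (⟪q i, kbar j⟫ / Real.sqrt d) ≤ Z i := by
    intro i
    have := hmask 0 1 h01 h11 i
    simpa only [zero_smul, add_zero, one_smul, hk1] using this
  have hD : ∀ i, ∑ j ∈ F i, Real.exp (⟪qbar i, kbar j⟫ / Real.sqrt d) ≤ Z i := by
    intro i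
    have := hmask 1 1 h11 h11 i
    simpa only [one_smul, hq1, hk1] using this
  -- main per-i bound
  have main : ∀ i, ∑ j ∈ F i, (f j (q i) - f j (qbar i)) ^ 2 ≤
      (4 * ‖q i - qbar i‖ ^ 2 * Kmax ^ 2 / d) * (Z i) ^ 2 := by
    intro i
    set c : ℝ := ‖q i - qbar i‖ * Kmax / Real.sqrt d with hc
    have hc0 : 0 ≤ c := by positivity
    set b : Fin Nk → ℝ := fun j =>
      Real.exp (⟪q i, k j⟫ / Real.sqrt d) + Real.exp (⟪qbar i, k j⟫ / Real.sqrt d) +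
      Real.exp (⟪q i, kbar j⟫ / Real.sqrt d) + Real.exp (⟪qbar i, kbar j⟫ / Real.sqrt d)
      with hb
    have hb0 : ∀ j, 0 ≤ b j := by
      intro j; rw [hb]; positivity
    have hinner : ∀ (v : EuclideanSpace ℝ (Fin d)), ‖v‖ ≤ Kmax →
        |⟪q i, v⟫ / Real.sqrt d - ⟪qbar i, v⟫ / Real.sqrt d| ≤ c := by
      intro v hv
      rw [div_sub_div_same, ← inner_sub_left, abs_div, abs_of_nonneg hsd.le, hc]
      gcongr
      calc |⟪q i - qbar i, v⟫| ≤ ‖q i - qbar i‖ * ‖v‖ := abs_real_inner_le_norm _ _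
        _ ≤ ‖q i - qbar i‖ * Kmax := by gcongr
    have habs : ∀ j, |f j (q i) - f j (qbar i)| ≤ c / 2 * b j := by
      intro j
      rw [hf, hf]
      have h1 := abs_exp_sub_exp_le (⟪q i, k j⟫ / Real.sqrt d) (⟪qbar i, k j⟫ / Real.sqrt d)
      have h2 := abs_exp_sub_exp_le (⟪q i, kbar j⟫ / Real.sqrt d) (⟪qbar i, kbar j⟫ / Real.sqrt d)
      have e1 := hinner (k j) (hK j)
      have e2 := hinner (kbar j) (hKbar j)
      have h1' : |Real.exp (⟪q i, k j⟫ / Real.sqrt d) - Real.exp (⟪qbar i, k j⟫ / Real.sqrt d)|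
          ≤ c * (Real.exp (⟪q i, k j⟫ / Real.sqrt d) + Real.exp (⟪qbar i, k j⟫ / Real.sqrt d)) / 2 := by
        refine h1.trans ?_
        gcongr
      have h2' : |Real.exp (⟪q i, kbar j⟫ / Real.sqrt d) - Real.exp (⟪qbar i, kbar j⟫ / Real.sqrt d)|
          ≤ c * (Real.exp (⟪q i, kbar j⟫ / Real.sqrt d) + Real.exp (⟪qbar i, kbar j⟫ / Real.sqrt d)) / 2 := by
        refine h2.trans ?_
        gcongr
      have habs3 : |(Real.exp (⟪q i, k j⟫ / Real.sqrt d) - Real.exp (⟪q i, kbar j⟫ / Real.sqrt d))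
          - (Real.exp (⟪qbar i, k j⟫ / Real.sqrt d) - Real.exp (⟪qbar i, kbar j⟫ / Real.sqrt d))|
          = |(Real.exp (⟪q i, k j⟫ / Real.sqrt d) - Real.exp (⟪qbar i, k j⟫ / Real.sqrt d))
          - (Real.exp (⟪q i, kbar j⟫ / Real.sqrt d) - Real.exp (⟪qbar i, kbar j⟫ / Real.sqrt d))| := by
        ring_nf
      rw [habs3, hb]
      calc |(Real.exp (⟪q i, k j⟫ / Real.sqrt d) - Real.exp (⟪qbar i, k j⟫ / Real.sqrt d))
          - (Real.exp (⟪q i, kbar j⟫ / Real.sqrt d) - Real.exp (⟪qbar i, kbar j⟫ / Real.sqrt d))|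
          ≤ |Real.exp (⟪q i, k j⟫ / Real.sqrt d) - Real.exp (⟪qbar i, k j⟫ / Real.sqrt d)|
            + |Real.exp (⟪q i, kbar j⟫ / Real.sqrt d) - Real.exp (⟪qbar i, kbar j⟫ / Real.sqrt d)| :=
            abs_sub _ _
        _ ≤ _ := by
            refine (add_le_add h1' h2').trans ?_
            apply le_of_eq
            ring
    have hsq : ∀ j ∈ F i, (f j (q i) - f j (qbar i)) ^ 2 ≤ (c / 2) ^ 2 * (b j) ^ 2 := by
      intro j _
      calc (f j (q i) - f j (qbar i)) ^ 2 = |f j (q i) - f j (qbar i)| ^ 2 := (sq_abs _).symm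
        _ ≤ (c / 2 * b j) ^ 2 := by
            apply pow_le_pow_left₀ (abs_nonneg _) (habs j)
        _ = (c / 2) ^ 2 * (b j) ^ 2 := by ring
    set T : ℝ := ∑ j ∈ F i, b j with hT
    have hT0 : 0 ≤ T := Finset.sum_nonneg fun j _ => hb0 j
    have hT4 : T ≤ 4 * Z i := by
      have : T = (∑ j ∈ F i, Real.exp (⟪q i, k j⟫ / Real.sqrt d))
          + (∑ j ∈ F i, Real.exp (⟪qbar i, k j⟫ / Real.sqrt d))
          + (∑ j ∈ F i, Real.exp (⟪q i, kbar j⟫ / Real.sqrt d))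
          + (∑ j ∈ F i, Real.exp (⟪qbar i, kbar j⟫ / Real.sqrt d)) := by
        rw [hT]
        simp only [hb, Finset.sum_add_distrib]
      rw [this]
      linarith [hA i, hB i, hC i, hD i]
    have hbT : ∀ j ∈ F i, (b j) ^ 2 ≤ b j * T := by
      intro j hj
      have hle : b j ≤ T := Finset.single_le_sum (fun j' _ => hb0 j') hj
      nlinarith [hb0 j]
    have hc2 : c ^ 2 = ‖q i - qbar i‖ ^ 2 * Kmax ^ 2 / d := by
      rw [hc, div_pow, mul_pow, Real.sq_sqrt hd'.le]
    calc ∑ j ∈ F i, (f j (q i) - f j (qbar i)) ^ 2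
        ≤ ∑ j ∈ F i, (c / 2) ^ 2 * (b j) ^ 2 := Finset.sum_le_sum hsq
      _ = (c / 2) ^ 2 * ∑ j ∈ F i, (b j) ^ 2 := by rw [Finset.mul_sum]
      _ ≤ (c / 2) ^ 2 * (T * T) := by
          have h5 : ∑ j ∈ F i, (b j) ^ 2 ≤ ∑ j ∈ F i, b j * T := Finset.sum_le_sum hbT
          have h6 : ∑ j ∈ F i, b j * T = T * T := by rw [← Finset.sum_mul]
          rw [← h6]
          exact mul_le_mul_of_nonneg_left h5 (by positivity)
      _ ≤ (c / 2) ^ 2 * (16 * (Z i) ^ 2) := by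
          have := hZpos i
          have : T * T ≤ 16 * (Z i) ^ 2 := by nlinarith
          exact mul_le_mul_of_nonneg_left this (by positivity)
      _ = 4 * c ^ 2 * (Z i) ^ 2 := by ring
      _ = (4 * ‖q i - qbar i‖ ^ 2 * Kmax ^ 2 / d) * (Z i) ^ 2 := by rw [hc2]; ring
  have hNq' : (Nq : ℝ) ≠ 0 := Nat.cast_ne_zero.mpr hNq.ne'
  calc ∑ i, (1 / (Z i) ^ 2) *
        ∑ j ∈ Finset.univ.filter (fun j => M i j = 0), (f j (q i) - f j (qbar i)) ^ 2
      ≤ ∑ i, (1 / (Z i) ^ 2) * ((4 * ‖q i - qbar i‖ ^ 2 * Kmax ^ 2 / d) * (Z i) ^ 2) := by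
        apply Finset.sum_le_sum
        intro i _
        exact mul_le_mul_of_nonneg_left (main i) (by positivity)
    _ = ∑ i, 4 * ‖q i - qbar i‖ ^ 2 * Kmax ^ 2 / d := by
        apply Finset.sum_congr rfl
        intro i _
        have := (hZpos i).ne'
        field_simp
    _ = 4 * Kmax ^ 2 / d * ∑ i, ‖q i - qbar i‖ ^ 2 := by
        rw [Finset.mul_sum]
        exact Finset.sum_congr rfl fun i _ => by ring
    _ = 4 * Nq * δq2 * Kmax ^ 2 / d := by
        rw [hδq2]
        field_simp
end
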